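/- In diffusion on a graph G, the potential difference satisfies P(t+1) - P(t) = Σ_{u<v} (x_{uv}(t) + y_{uv}(t))·(w_v(t+1) - w_u(t+1)), where the sum is over all pairs u < v, and x_{uv}, y_{uv} are the sign labels of edges (zero for non-edges). -/

import Mathlib

open Finset Classical

/-- One step of the diffusion process: each vertex gains one chip from each
neighbour with a strictly larger label and loses one chip to each neighbour
with a strictly smaller label. -/
noncomputable def diffStep {n : ℕ} (G : SimpleGraph (Fin n)) (w : Fin n → ℤ) : Fin n → ℤ :=
  fun v => w v + ((Finset.univ.filter fun u => G.Adj v u ∧ w v < w u).card : ℤ)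
             - ((Finset.univ.filter fun u => G.Adj v u ∧ w u < w v).card : ℤ)

/-- The labelling at time `t` of the diffusion process started from `w0`. -/
noncomputable def diff {n : ℕ} (G : SimpleGraph (Fin n)) (w0 : Fin n → ℤ) (t : ℕ) : Fin n → ℤ :=
  (diffStep G)^[t] w0

/-- The potential `P(t) = ∑_v w_v(t) · w_v(t+1)`. -/
noncomputable def pot {n : ℕ} (G : SimpleGraph (Fin n)) (w0 : Fin n → ℤ) (t : ℕ) : ℤ :=
  ∑ v, diff G w0 t v * diff G w0 (t + 1) v

/-- `x_{uv}(t) = sgn(w_u(t) - w_v(t))` for edges, `0` for non-edges. -/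
noncomputable def xlab {n : ℕ} (G : SimpleGraph (Fin n)) (w0 : Fin n → ℤ)
    (u v : Fin n) (t : ℕ) : ℤ :=
  if G.Adj u v then Int.sign (diff G w0 t u - diff G w0 t v) else 0

/-- `y_{uv}(t) = sgn(w_u(t+1) - w_v(t+1))` for edges, `0` for non-edges. -/
noncomputable def ylab {n : ℕ} (G : SimpleGraph (Fin n)) (w0 : Fin n → ℤ)
    (u v : Fin n) (t : ℕ) : ℤ :=
  if G.Adj u v then Int.sign (diff G w0 (t + 1) u - diff G w0 (t + 1) v) else 0

/-- The label `(x_{uv}(t), y_{uv}(t))` of the edge `uv` at time `t`. -/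
noncomputable def elabel {n : ℕ} (G : SimpleGraph (Fin n)) (w0 : Fin n → ℤ)
    (u v : Fin n) (t : ℕ) : ℤ × ℤ :=
  (xlab G w0 u v t, ylab G w0 u v t)

/-
The diffusion rule says `w_v(t+1) = w_v(t) + ∑_u x_{uv}(t)` and
`w_v(t+2) = w_v(t+1) + ∑_u y_{uv}(t)`, so
`P(t+1) - P(t) = ∑_v w_v(t+1) (w_v(t+2) - w_v(t)) = ∑_v w_v(t+1) ∑_u (x_{uv} + y_{uv})`.
The kernel `x + y` is antisymmetric with zero diagonal, and pairing the terms `(u, v)` and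
`(v, u)` turns such a double sum into a sum over the pairs `u < v`.
-/

lemma Finset.sum_ite_sign_eq_card_sub_card {ι : Type*} [Fintype ι] (p : ι → Prop)
    [DecidablePred p] (g : ι → ℤ) :
    ∑ u, (if p u then (g u).sign else 0) =
      (#{u | p u ∧ 0 < g u} : ℤ) - #{u | p u ∧ g u < 0} := by
  simp only [card_filter, Nat.cast_sum, Nat.cast_ite, Nat.cast_one, Nat.cast_zero,
    ← sum_sub_distrib]
  refine sum_congr rfl fun u _ => ?_
  by_cases hp : p u
  · rcases lt_trichotomy (g u) 0 with h | h | h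
    · simp [hp, h, lt_asymm h, Int.sign_eq_neg_one_of_neg]
    · simp [hp, h]
    · simp [hp, h, lt_asymm h, Int.sign_eq_one_of_pos]
  · simp [hp]

lemma Finset.sum_mul_sum_eq_sum_lt_of_antisymm {ι R : Type*} [Fintype ι] [LinearOrder ι] [CommRing R]
    (a : ι → ι → R) (ha : ∀ u v, a v u = -a u v) (ha₀ : ∀ u, a u u = 0) (f : ι → R) :
    ∑ v, f v * ∑ u, a u v =
      ∑ p ∈ univ.filter (fun p : ι × ι => p.1 < p.2), a p.1 p.2 * (f p.2 - f p.1) := by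
  set g : ι × ι → R := fun p => a p.1 p.2 * f p.2
  have h_split : ∀ p : ι × ι,
      g p = (if p.1 < p.2 then g p else 0) + if p.2 < p.1 then g p else 0 := by
    rintro ⟨u, v⟩
    rcases lt_trichotomy u v with h | rfl | h
    · simp [h, h.not_gt]
    · simp [g, ha₀]
    · simp [h, h.not_gt]
  have h_swap : ∑ p : ι × ι, (if p.2 < p.1 then g p else 0) =
      ∑ p : ι × ι, if p.1 < p.2 then g p.swap else 0 :=
    ((Equiv.prodComm ι ι).sum_comp fun p => if p.2 < p.1 then g p else 0).symm
  calc ∑ v, f v * ∑ u, a u v = ∑ p : ι × ι, g p := by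
        simp only [g, Fintype.sum_prod_type_right, mul_sum, mul_comm]
    _ = ∑ p : ι × ι, if p.1 < p.2 then g p + g p.swap else 0 := by
        rw [Fintype.sum_congr _ _ h_split, sum_add_distrib, h_swap, ← sum_add_distrib]
        exact Fintype.sum_congr _ _ fun p => by split_ifs <;> simp
    _ = _ := by
        rw [← sum_filter]
        refine sum_congr rfl fun p _ => ?_
        simp only [g, Prod.fst_swap, Prod.snd_swap, ha p.1 p.2]
        ring

section Diffusion

variable {n : ℕ} (G : SimpleGraph (Fin n)) (w0 : Fin n → ℤ)

lemma diffStep_apply (w : Fin n → ℤ) (v : Fin n) :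
    diffStep G w v = w v + ∑ u, if G.Adj u v then (w u - w v).sign else 0 := by
  rw [sum_ite_sign_eq_card_sub_card, diffStep, add_sub_assoc]
  simp only [G.adj_comm, sub_pos, sub_neg]

lemma diff_succ (t : ℕ) : diff G w0 (t + 1) = diffStep G (diff G w0 t) :=
  Function.iterate_succ_apply' _ _ _

lemma diff_succ_apply (t : ℕ) (v : Fin n) :
    diff G w0 (t + 1) v = diff G w0 t v + ∑ u, xlab G w0 u v t := by
  rw [diff_succ, diffStep_apply]; rfl

lemma diff_succ_succ_apply (t : ℕ) (v : Fin n) :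
    diff G w0 (t + 2) v = diff G w0 (t + 1) v + ∑ u, ylab G w0 u v t := by
  rw [diff_succ, diffStep_apply]; rfl

lemma xlab_swap (u v : Fin n) (t : ℕ) : xlab G w0 v u t = -xlab G w0 u v t := by
  simp only [xlab, G.adj_comm v u, apply_ite Neg.neg, neg_zero, ← Int.sign_neg, neg_sub]

lemma ylab_swap (u v : Fin n) (t : ℕ) : ylab G w0 v u t = -ylab G w0 u v t := by
  simp only [ylab, G.adj_comm v u, apply_ite Neg.neg, neg_zero, ← Int.sign_neg, neg_sub]

lemma xlab_self (u : Fin n) (t : ℕ) : xlab G w0 u u t = 0 := by simp [xlab]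

lemma ylab_self (u : Fin n) (t : ℕ) : ylab G w0 u u t = 0 := by simp [ylab]

lemma pot_succ_sub_pot (t : ℕ) :
    pot G w0 (t + 1) - pot G w0 t =
      ∑ v, diff G w0 (t + 1) v * ∑ u, (xlab G w0 u v t + ylab G w0 u v t) := by
  simp only [pot, ← sum_sub_distrib, sum_add_distrib]
  refine sum_congr rfl fun v _ => ?_
  linear_combination
    diff G w0 (t + 1) v * (diff_succ_succ_apply G w0 t v + diff_succ_apply G w0 t v)

end Diffusion

theorem stmt4 {n : ℕ} (G : SimpleGraph (Fin n)) (w0 : Fin n → ℤ) (t : ℕ) :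
    pot G w0 (t + 1) - pot G w0 t =
      ∑ p ∈ Finset.univ.filter (fun p : Fin n × Fin n => p.1 < p.2),
        (xlab G w0 p.1 p.2 t + ylab G w0 p.1 p.2 t) *
          (diff G w0 (t + 1) p.2 - diff G w0 (t + 1) p.1) := by
  rw [pot_succ_sub_pot]
  refine sum_mul_sum_eq_sum_lt_of_antisymm (fun u v => xlab G w0 u v t + ylab G w0 u v t) (fun u v => ?_)
    (fun u => ?_) _
  · rw [xlab_swap, ylab_swap, neg_add]
  · rw [xlab_self, ylab_self, add_zero]
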